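/- (Descent lemma for inexact proximal gradient, version 2) Under the same setting, F(x_{k+1}) <= F(x_k) - (1/(2L)) ||Delta_k||_2^2 + (1/(2L)) ||g_k - hat{g}_k||_2^2, where Delta_k = -(tilde{nabla} r(x_{k+1}) + g_k) is the ideal direction. -/

import Mathlib

open scoped RealInnerProductSpace

/-!
A gradient that is `L`-Lipschitz makes `f` lie below its quadratic model
`f x + ⟪∇f x, y - x⟫ + L/2 ‖y - x‖²`, and the subgradient inequality bounds `r xk1` by the
linearization `r xk + ⟪v, xk1 - xk⟫`. The step `xk1 - xk = -(v + ĝ)/L` makes the sum of the two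
models a completed square: `⟪u, s⟫ + L/2 ‖s‖² = (‖u + L s‖² - ‖u‖²)/(2L)` with `u = v + ∇f xk`,
and `u + L s = ∇f xk - ĝ` is exactly the gradient error.
-/

section InnerProductSpace

variable {E : Type*} [NormedAddCommGroup E] [InnerProductSpace ℝ E]

theorem inner_add_half_mul_norm_sq_eq {L : ℝ} (hL : L ≠ 0) (u s : E) :
    ⟪u, s⟫ + L / 2 * ‖s‖ ^ 2 = (‖u + L • s‖ ^ 2 - ‖u‖ ^ 2) / (2 * L) := by
  rw [norm_add_sq_real, real_inner_smul_right, norm_smul, Real.norm_eq_abs, mul_pow, sq_abs]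
  field_simp
  ring

end InnerProductSpace

section LipschitzGradient

variable {E : Type*} [NormedAddCommGroup E] [InnerProductSpace ℝ E] [CompleteSpace E]
  {f : E → ℝ}

theorem Differentiable.hasDerivAt_comp_add_smul (hf : Differentiable ℝ f) (x w : E) (t : ℝ) :
    HasDerivAt (fun s : ℝ => f (x + s • w)) ⟪gradient f (x + t • w), w⟫ t := by
  have hline : HasDerivAt (fun s : ℝ => x + s • w) w t := by
    simpa using ((hasDerivAt_id t).smul_const w).const_add x
  have h := (hf _).hasGradientAt.hasFDerivAt.comp_hasDerivAt t hline
  rw [InnerProductSpace.toDual_apply_apply] at h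
  exact h

theorem le_add_inner_gradient_add_sq_of_lipschitz_gradient {L : ℝ}
    (hf : Differentiable ℝ f) (hlip : ∀ x y, ‖gradient f x - gradient f y‖ ≤ L * ‖x - y‖)
    (x y : E) : f y ≤ f x + ⟪gradient f x, y - x⟫ + L / 2 * ‖y - x‖ ^ 2 := by
  set w := y - x
  -- The gap between the quadratic model and `f` along the segment; Lipschitz gradient makes it
  -- antitone for `t ≥ 0`.
  let φ : ℝ → ℝ := fun t => f (x + t • w) - t * ⟪gradient f x, w⟫ - L / 2 * t ^ 2 * ‖w‖ ^ 2
  have hφ : ∀ t, HasDerivAt φ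
      (⟪gradient f (x + t • w), w⟫ - ⟪gradient f x, w⟫ - L * t * ‖w‖ ^ 2) t := by
    intro t
    refine (((hf.hasDerivAt_comp_add_smul x w t).sub
      ((hasDerivAt_id t).mul_const ⟪gradient f x, w⟫)).sub
      (((hasDerivAt_pow 2 t).const_mul (L / 2)).mul_const (‖w‖ ^ 2))).congr_deriv ?_
    ring
  have hφ' : ∀ t ∈ interior (Set.Ici (0 : ℝ)),
      ⟪gradient f (x + t • w), w⟫ - ⟪gradient f x, w⟫ - L * t * ‖w‖ ^ 2 ≤ 0 := by
    intro t ht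
    rw [interior_Ici, Set.mem_Ioi] at ht
    have hgrad : ‖gradient f (x + t • w) - gradient f x‖ ≤ L * (t * ‖w‖) := by
      simpa [norm_smul, Real.norm_of_nonneg ht.le] using hlip (x + t • w) x
    have := real_inner_le_norm (gradient f (x + t • w) - gradient f x) w
    rw [inner_sub_left] at this
    nlinarith [norm_nonneg w]
  have hanti : AntitoneOn φ (Set.Ici 0) :=
    antitoneOn_of_hasDerivWithinAt_nonpos (convex_Ici 0)
      (fun t _ => (hφ t).continuousAt.continuousWithinAt)
      (fun t _ => (hφ t).hasDerivWithinAt) hφ'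
  have h0 : φ 0 = f x := by simp [φ]
  have h1 : φ 1 = f y - ⟪gradient f x, w⟫ - L / 2 * ‖w‖ ^ 2 := by
    simp only [φ, one_smul, one_mul, one_pow, mul_one, w, add_sub_cancel]
  have := hanti (Set.mem_Ici.mpr le_rfl) (Set.mem_Ici.mpr zero_le_one) zero_le_one
  linarith

end LipschitzGradient

theorem prox_descent_v2_general {d : ℕ} (L : ℝ) (hL : 0 < L)
    (f r : EuclideanSpace ℝ (Fin d) → ℝ)
    (hdiff : Differentiable ℝ f)
    (hlip : ∀ x y, ‖gradient f x - gradient f y‖ ≤ L * ‖x - y‖)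
    (xk xk1 ghat v : EuclideanSpace ℝ (Fin d))
    (hsub : ∀ y, r xk1 + ⟪v, y - xk1⟫ ≤ r y)
    (hstep : xk1 = xk - (1 / L) • (v + ghat)) :
    f xk1 + r xk1 ≤ f xk + r xk - (1 / (2 * L)) * ‖v + gradient f xk‖ ^ 2
      + (1 / (2 * L)) * ‖gradient f xk - ghat‖ ^ 2 := by
  have hf := le_add_inner_gradient_add_sq_of_lipschitz_gradient hdiff hlip xk xk1
  have hr : r xk1 ≤ r xk + ⟪v, xk1 - xk⟫ := by
    have := hsub xk
    rw [← neg_sub, inner_neg_right] at this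
    linarith
  have hresidual : v + gradient f xk + L • (xk1 - xk) = gradient f xk - ghat := by
    rw [hstep, sub_sub_cancel_left, smul_neg, smul_smul, mul_one_div_cancel hL.ne', one_smul]
    abel
  have hsq := inner_add_half_mul_norm_sq_eq hL.ne' (v + gradient f xk) (xk1 - xk)
  rw [hresidual, inner_add_left] at hsq
  linear_combination hf + hr + hsq

/-- Descent lemma for inexact proximal gradient, version 2. -/
theorem prox_descent_v2 {d : ℕ} (L : ℝ) (hL : 0 < L)
    (f r : EuclideanSpace ℝ (Fin d) → ℝ)
    (hdiff : Differentiable ℝ f)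
    (hlip : ∀ x y, ‖gradient f x - gradient f y‖ ≤ L * ‖x - y‖)
    (hr : ConvexOn ℝ Set.univ r)
    (xk xk1 ghat v : EuclideanSpace ℝ (Fin d))
    (hsub : ∀ y, r xk1 + ⟪v, y - xk1⟫ ≤ r y)
    (hstep : xk1 = xk - (1 / L) • (v + ghat)) :
    f xk1 + r xk1 ≤ f xk + r xk - (1 / (2 * L)) * ‖v + gradient f xk‖ ^ 2
      + (1 / (2 * L)) * ‖gradient f xk - ghat‖ ^ 2 :=
  prox_descent_v2_general L hL f r hdiff hlip xk xk1 ghat v hsub hstep
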